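/- arXiv:2303.01368 — 3 statements merged into one kernel-verified Lean document; each statement's English description precedes it below -/
import Mathlib

section
/- For a 7-segment S-curve velocity profile with piecewise-constant jerk taking values in {J, 0, -J} (J > 0), accelerating from rest velocity v_s to cruise velocity v_e with zero initial and final acceleration and acceleration bounded by A, the minimum time to change velocity by Δv = v_e - v_s > 0 is T = Δv/A + A/J if Δv ≥ A²/J, and T = 2·√(Δv/J) otherwise. -/
open Set Filter Topology

lemma slope_left_le {f g : ℝ → ℝ} {x z y : ℝ}
    (hf : ∀ t, HasDerivAt f (g t) t) (hg : MonotoneOn g (Ioo x z))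
    (hy : y ∈ Ioo x z) : g x ≤ g y := by
  have htend : Tendsto (slope f x) (𝓝[>] x) (𝓝 (g x)) :=
    (hasDerivAt_iff_tendsto_slope.1 (hf x)).mono_left
      (nhdsWithin_mono x fun u hu => ne_of_gt hu)
  refine le_of_tendsto htend ?_
  filter_upwards [Ioo_mem_nhdsGT_of_mem ⟨le_refl x, hy.1⟩] with t ht
  obtain ⟨c, hc, hceq⟩ := exists_hasDerivAt_eq_slope f g ht.1
    (fun u _ => (hf u).continuousAt.continuousWithinAt) (fun u _ => hf u)
  rw [slope_def_field, ← hceq]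
  exact hg ⟨hc.1, hc.2.trans (ht.2.trans hy.2)⟩ hy (hc.2.trans ht.2).le

lemma slope_right_le {f g : ℝ → ℝ} {x z y : ℝ}
    (hf : ∀ t, HasDerivAt f (g t) t) (hg : MonotoneOn g (Ioo x z))
    (hy : y ∈ Ioo x z) : g y ≤ g z := by
  have htend : Tendsto (slope f z) (𝓝[<] z) (𝓝 (g z)) :=
    (hasDerivAt_iff_tendsto_slope.1 (hf z)).mono_left
      (nhdsWithin_mono z fun u hu => ne_of_lt hu)
  refine ge_of_tendsto htend ?_
  filter_upwards [Ioo_mem_nhdsLT_of_mem ⟨hy.2, le_refl z⟩] with t ht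
  obtain ⟨c, hc, hceq⟩ := exists_hasDerivAt_eq_slope f g ht.2
    (fun u _ => (hf u).continuousAt.continuousWithinAt) (fun u _ => hf u)
  rw [slope_comm, slope_def_field, ← hceq]
  exact hg hy ⟨(hy.1.trans ht.1).trans hc.1, hc.2⟩ (ht.1.trans hc.1).le

lemma monoIcc_of_monoIoo {f g : ℝ → ℝ} {x z : ℝ}
    (hf : ∀ t, HasDerivAt f (g t) t) (hg : MonotoneOn g (Ioo x z)) :
    MonotoneOn g (Icc x z) := by
  intro u hu v hv huv
  rcases eq_or_lt_of_le huv with rfl | huv'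
  · exact le_refl _
  have hxz : x < z := lt_of_le_of_lt hu.1 (lt_of_lt_of_le huv' hv.2)
  rcases eq_or_lt_of_le hu.1 with rfl | hxu
  · rcases eq_or_lt_of_le hv.2 with rfl | hvz
    · obtain ⟨y, hy⟩ := exists_between hxz
      exact (slope_left_le hf hg hy).trans (slope_right_le hf hg hy)
    · exact slope_left_le hf hg ⟨huv', hvz⟩
  · rcases eq_or_lt_of_le hv.2 with rfl | hvz
    · exact slope_right_le hf hg ⟨hxu, huv'⟩
    · exact hg ⟨hxu, huv'.trans hvz⟩ ⟨hxu.trans huv', hvz⟩ huv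

/-- Key gluing lemma: if `f' = g` everywhere and `g` has nonnegative derivative
outside a finite set, then `g` is monotone on any `Icc`. -/
lemma mono_of_finset_aux {f g : ℝ → ℝ} (hf : ∀ t, HasDerivAt f (g t) t) :
    ∀ n (S : Finset ℝ), S.card ≤ n → ∀ x z : ℝ,
      (∀ t ∈ Ioo x z, t ∉ S → ∃ g', 0 ≤ g' ∧ HasDerivAt g g' t) →
      MonotoneOn g (Icc x z) := by
  intro n
  induction n with
  | zero =>
    intro S hS x z hg
    have hSe : ∀ t ∈ Ioo x z, ∃ g', 0 ≤ g' ∧ HasDerivAt g g' t := by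
      intro t ht
      exact hg t ht (by simp [Finset.card_eq_zero.1 (Nat.le_zero.1 hS)])
    refine monoIcc_of_monoIoo hf ?_
    refine monotoneOn_of_deriv_nonneg (convex_Ioo x z) ?_ ?_ ?_
    · intro t ht
      obtain ⟨g', _, hd⟩ := hSe t ht
      exact hd.continuousAt.continuousWithinAt
    · intro t ht
      rw [interior_Ioo] at ht
      obtain ⟨g', _, hd⟩ := hSe t ht
      exact hd.differentiableAt.differentiableWithinAt
    · intro t ht
      rw [interior_Ioo] at ht
      obtain ⟨g', hg', hd⟩ := hSe t ht
      rw [hd.deriv]; exact hg'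
  | succ n ih =>
    intro S hS x z hg
    by_cases hne : (S.filter (· ∈ Ioo x z)).Nonempty
    · set s := (S.filter (· ∈ Ioo x z)).min' hne with hs
      have hsmem := (S.filter (· ∈ Ioo x z)).min'_mem hne
      rw [Finset.mem_filter] at hsmem
      have hleft : MonotoneOn g (Icc x s) := by
        refine ih (S.filter (· ∈ Ioo x s)) ?_ x s ?_
        · -- this filter is empty
          have : S.filter (· ∈ Ioo x s) = ∅ := by
            rw [Finset.filter_eq_empty_iff]
            intro t htS htIoo
            have : t ∈ S.filter (· ∈ Ioo x z) :=
              Finset.mem_filter.2 ⟨htS, htIoo.1, htIoo.2.trans hsmem.2.2⟩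
            exact absurd (Finset.min'_le _ t this) (not_le.2 htIoo.2)
          simp only [mem_Ioo] at this ⊢
          rw [this]; simp
        · intro t ht htS
          by_cases h : t ∈ S
          · exact absurd (Finset.mem_filter.2 ⟨h, ht⟩) htS
          · exact hg t ⟨ht.1, ht.2.trans hsmem.2.2⟩ h
      have hright : MonotoneOn g (Icc s z) := by
        refine ih (S.erase s) ?_ s z ?_
        · have h1 : (S.erase s).card < S.card := Finset.card_erase_lt_of_mem hsmem.1
          omega
        · intro t ht htS
          have htne : t ≠ s := ne_of_gt ht.1
          have : t ∉ S := fun h => htS (Finset.mem_erase.2 ⟨htne, h⟩)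
          exact hg t ⟨hsmem.2.1.trans ht.1, ht.2⟩ this
      -- glue
      intro u hu v hv huv
      rcases le_total v s with h | h
      · exact hleft ⟨hu.1, huv.trans h⟩ ⟨hv.1, h⟩ huv
      · rcases le_total u s with h' | h'
        · have hsz : s ≤ z := hsmem.2.2.le
          exact (hleft ⟨hu.1, h'⟩ ⟨hu.1.trans h', le_refl s⟩ h').trans
            (hright ⟨le_refl s, hsz⟩ ⟨h, hv.2⟩ h)
        · exact hright ⟨h', hu.2⟩ ⟨h'.trans huv, hv.2⟩ huv
    · refine ih ∅ (Nat.zero_le n) x z ?_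
      intro t ht _
      refine hg t ht fun hmem => hne ⟨t, Finset.mem_filter.2 ⟨hmem, ht⟩⟩

lemma mono_of_finset {f g : ℝ → ℝ} (hf : ∀ t, HasDerivAt f (g t) t) (S : Finset ℝ)
    (hg : ∀ t ∉ S, ∃ g', 0 ≤ g' ∧ HasDerivAt g g' t) {x z : ℝ} :
    MonotoneOn g (Icc x z) :=
  mono_of_finset_aux hf S.card S le_rfl x z (fun t _ ht => hg t ht)

lemma scurve_lb (A J vs ve T : ℝ) (hA : 0 < A) (hJ : 0 < J) (hdv : 0 < ve - vs)
    (hT : 0 < T) (v a : ℝ → ℝ)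
    (hv : ∀ t, HasDerivAt v (a t) t) (hv0 : v 0 = vs) (hvT : v T = ve)
    (ha0 : a 0 = 0) (haT : a T = 0)
    (hb : ∀ t ∈ Icc (0:ℝ) T, 0 ≤ a t ∧ a t ≤ A)
    (S : Finset ℝ) (hjerk : ∀ t ∉ S, ∃ j ∈ ({-J, 0, J} : Set ℝ), HasDerivAt a j t) :
    (if A ^ 2 / J ≤ ve - vs then (ve - vs) / A + A / J
     else 2 * Real.sqrt ((ve - vs) / J)) ≤ T := by
  have hJt : ∀ t : ℝ, HasDerivAt (fun t => J * t) J t := by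
    intro t; simpa using (hasDerivAt_id t).const_mul J
  have hsq : ∀ t : ℝ, HasDerivAt (fun t : ℝ => J/2 * t^2) (J * t) t := by
    intro t
    have := (hasDerivAt_pow 2 t).const_mul (J/2)
    exact this.congr_deriv (by push_cast; ring)
  have hf1 : ∀ t, HasDerivAt (fun t => J/2 * t^2 - v t) (J * t - a t) t :=
    fun t => (hsq t).sub (hv t)
  have hf2 : ∀ t, HasDerivAt (fun t => J/2 * t^2 + v t) (J * t + a t) t :=
    fun t => (hsq t).add (hv t)
  have hjle : ∀ t ∉ S, ∃ j ∈ ({-J, 0, J} : Set ℝ), HasDerivAt a j t ∧ -J ≤ j ∧ j ≤ J := by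
    intro t ht
    obtain ⟨j, hjm, hd⟩ := hjerk t ht
    refine ⟨j, hjm, hd, ?_, ?_⟩ <;>
    · simp only [mem_insert_iff, mem_singleton_iff] at hjm
      rcases hjm with rfl | rfl | rfl <;> linarith
  have mono1 : MonotoneOn (fun t => J * t - a t) (Icc (0:ℝ) T) := by
    refine mono_of_finset hf1 S ?_
    intro t ht
    obtain ⟨j, _, hd, _, hjJ⟩ := hjle t ht
    exact ⟨J - j, by linarith, (hJt t).sub hd⟩
  have mono2 : MonotoneOn (fun t => J * t + a t) (Icc (0:ℝ) T) := by
    refine mono_of_finset hf2 S ?_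
    intro t ht
    obtain ⟨j, _, hd, hjJ, _⟩ := hjle t ht
    exact ⟨J + j, by linarith, (hJt t).add hd⟩
  have haJt : ∀ t ∈ Icc (0:ℝ) T, a t ≤ J * t := by
    intro t ht
    have := mono1 (left_mem_Icc.2 hT.le) ht ht.1
    simp only [mul_zero, ha0, sub_zero] at this
    linarith
  have haJTt : ∀ t ∈ Icc (0:ℝ) T, a t ≤ J * (T - t) := by
    intro t ht
    have := mono2 ht (right_mem_Icc.2 hT.le) ht.2
    simp only [haT, add_zero] at this
    linarith
  -- F1
  have F1 : ∀ t ∈ Icc (0:ℝ) T, v t - vs ≤ J/2 * t^2 := by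
    have hm : MonotoneOn (fun t => J/2 * t^2 - v t) (Icc (0:ℝ) T) := by
      refine monotoneOn_of_deriv_nonneg (convex_Icc 0 T)
        (fun t _ => (hf1 t).continuousAt.continuousWithinAt)
        (fun t _ => (hf1 t).differentiableAt.differentiableWithinAt) ?_
      intro t ht
      rw [interior_Icc] at ht
      rw [(hf1 t).deriv]
      have := haJt t (Ioo_subset_Icc_self ht)
      linarith
    intro t ht
    have := hm (left_mem_Icc.2 hT.le) ht ht.1
    simp only [hv0] at this
    nlinarith [this]
  -- F2
  have hg2 : ∀ t : ℝ, HasDerivAt (fun t => v t + J/2 * (T - t)^2) (a t - J * (T - t)) t := by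
    intro t
    have h1 : HasDerivAt (fun t : ℝ => T - t) (-1 : ℝ) t := by
      simpa using (hasDerivAt_id t).const_sub T
    have h2 := (h1.pow 2).const_mul (J/2)
    have h3 := (hv t).add h2
    exact h3.congr_deriv (by push_cast; ring)
  have F2 : ∀ t ∈ Icc (0:ℝ) T, ve - v t ≤ J/2 * (T - t)^2 := by
    have hm : AntitoneOn (fun t => v t + J/2 * (T - t)^2) (Icc (0:ℝ) T) := by
      refine antitoneOn_of_deriv_nonpos (convex_Icc 0 T)
        (fun t _ => (hg2 t).continuousAt.continuousWithinAt)
        (fun t _ => (hg2 t).differentiableAt.differentiableWithinAt) ?_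
      intro t ht
      rw [interior_Icc] at ht
      rw [(hg2 t).deriv]
      have := haJTt t (Ioo_subset_Icc_self ht)
      linarith
    intro t ht
    have := hm ht (right_mem_Icc.2 hT.le) ht.2
    simp only [hvT, sub_self] at this
    nlinarith [this]
  -- F3
  have F3 : ∀ s ∈ Icc (0:ℝ) T, ∀ t ∈ Icc (0:ℝ) T, s ≤ t → v t - v s ≤ A * (t - s) := by
    have hfa : ∀ u : ℝ, HasDerivAt (fun u => A * u - v u) (A - a u) u := by
      intro u
      have := ((hasDerivAt_id u).const_mul A).sub (hv u)
      exact this.congr_deriv (by simp)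
    have hm : MonotoneOn (fun u => A * u - v u) (Icc (0:ℝ) T) := by
      refine monotoneOn_of_deriv_nonneg (convex_Icc 0 T)
        (fun t _ => (hfa t).continuousAt.continuousWithinAt)
        (fun t _ => (hfa t).differentiableAt.differentiableWithinAt) ?_
      intro t ht
      rw [interior_Icc] at ht
      rw [(hfa t).deriv]
      have := (hb t (Ioo_subset_Icc_self ht)).2
      linarith
    intro s hs t ht hst
    have h := hm hs ht hst
    dsimp only at h
    nlinarith [h]
  have hhalf : T - T/2 = T/2 := by ring
  have hmid : ve - vs ≤ J * (T/2)^2 := by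
    have h1 := F1 (T/2) ⟨by linarith, by linarith⟩
    have h2 := F2 (T/2) ⟨by linarith, by linarith⟩
    rw [hhalf] at h2
    linarith
  split_ifs with hcase
  · by_cases h2A : 2 * (A/J) ≤ T
    · have hq : 0 < A/J := div_pos hA hJ
      have e1 := F1 (A/J) ⟨hq.le, by linarith⟩
      have e3 := F2 (T - A/J) ⟨by linarith, by linarith⟩
      have e2 := F3 (A/J) ⟨hq.le, by linarith⟩ (T - A/J) ⟨by linarith, by linarith⟩ (by linarith)
      have hTT : T - (T - A/J) = A/J := by ring
      rw [hTT] at e3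
      have hAJsq : J/2 * (A/J)^2 = A^2/(2*J) := by field_simp
      rw [hAJsq] at e1 e3
      have key : ve - vs ≤ A * T - A^2/J := by
        have h5 : A * (T - A/J - A/J) = A*T - 2*(A*(A/J)) := by ring
        have hAA : A * (A/J) = A^2/J := by field_simp
        have hAA2 : A^2/(2*J) + A^2/(2*J) = A^2/J := by field_simp; ring
        linarith [e1, e2, e3]
      calc (ve - vs)/A + A/J ≤ (A * T - A^2/J)/A + A/J := by gcongr
        _ = T := by field_simp; ring
    · exfalso
      push_neg at h2A
      have h1 : A^2 ≤ (ve - vs) * J := (div_le_iff₀ hJ).1 hcase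
      have h2A' : T < 2*A/J := by
        have : 2*(A/J) = 2*A/J := by ring
        linarith
      have h2 : T*J < 2*A := (lt_div_iff₀ hJ).1 h2A'
      nlinarith [hmid, h1, mul_self_lt_mul_self (mul_pos hT hJ).le h2, hJ.le]
  · have h4 : (ve - vs)/J ≤ (T/2)^2 := by
      rw [div_le_iff₀ hJ]
      nlinarith [hmid]
    have h5 := Real.sqrt_le_sqrt h4
    rw [Real.sqrt_sq (by linarith : (0:ℝ) ≤ T/2)] at h5
    linarith

noncomputable def sAccel (J t1 T : ℝ) : ℝ → ℝ :=
  fun t => max 0 (min (J * t1) (min (J * t) (J * (T - t))))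

lemma sAccel_cont (J t1 T : ℝ) : Continuous (sAccel J t1 T) := by
  unfold sAccel; fun_prop

lemma scurve_profile (A J vs ve t1 t2 : ℝ) (hA : 0 < A) (hJ : 0 < J)
    (ht1 : 0 < t1) (h12 : t1 ≤ t2) (hpa : J * t1 ≤ A) (harea : J * t1 * t2 = ve - vs) :
    0 < t1 + t2 ∧ ∃ v a : ℝ → ℝ,
      (∀ t, HasDerivAt v (a t) t) ∧
      v 0 = vs ∧ v (t1 + t2) = ve ∧ a 0 = 0 ∧ a (t1 + t2) = 0 ∧
      (∀ t ∈ Icc (0 : ℝ) (t1 + t2), 0 ≤ a t ∧ a t ≤ A) ∧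
      (∃ S : Finset ℝ, ∀ t ∉ S, ∃ j ∈ ({-J, 0, J} : Set ℝ), HasDerivAt a j t) := by
  have ht2 : 0 < t2 := lt_of_lt_of_le ht1 h12
  have hT : 0 < t1 + t2 := by linarith
  set a : ℝ → ℝ := sAccel J t1 (t1 + t2) with ha_def
  have ha_cont : Continuous a := sAccel_cont _ _ _
  set v : ℝ → ℝ := fun t => vs + ∫ s in (0:ℝ)..t, a s with hv_def
  have hv : ∀ t, HasDerivAt v (a t) t := fun t =>
    ((ha_cont.integral_hasStrictDerivAt 0 t).hasDerivAt).const_add vs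
  have hJt : ∀ t : ℝ, HasDerivAt (fun t => J * t) J t := by
    intro t; simpa using (hasDerivAt_id t).const_mul J
  -- segment values
  have haeq1 : ∀ u ∈ Icc (0:ℝ) t1, a u = J * u := by
    intro u hu
    show max 0 (min (J * t1) (min (J * u) (J * (t1 + t2 - u)))) = J * u
    rw [min_eq_left (mul_le_mul_of_nonneg_left (by linarith [hu.1, hu.2] : u ≤ t1 + t2 - u) hJ.le),
      min_eq_right (mul_le_mul_of_nonneg_left hu.2 hJ.le),
      max_eq_right (mul_nonneg hJ.le hu.1)]
  have haeq2 : ∀ u ∈ Icc t1 t2, a u = J * t1 := by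
    intro u hu
    show max 0 (min (J * t1) (min (J * u) (J * (t1 + t2 - u)))) = J * t1
    rw [min_eq_left (le_min (mul_le_mul_of_nonneg_left hu.1 hJ.le)
        (mul_le_mul_of_nonneg_left (by linarith [hu.2] : t1 ≤ t1 + t2 - u) hJ.le)),
      max_eq_right (mul_nonneg hJ.le ht1.le)]
  have haeq3 : ∀ u ∈ Icc t2 (t1 + t2), a u = J * (t1 + t2 - u) := by
    intro u hu
    show max 0 (min (J * t1) (min (J * u) (J * (t1 + t2 - u)))) = J * (t1 + t2 - u)
    rw [min_eq_right (mul_le_mul_of_nonneg_left (by linarith [hu.1] : t1 + t2 - u ≤ u) hJ.le),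
      min_eq_right (mul_le_mul_of_nonneg_left (by linarith [hu.1] : t1 + t2 - u ≤ t1) hJ.le),
      max_eq_right (mul_nonneg hJ.le (by linarith [hu.2]))]
  -- integral
  have i1 : ∫ s in (0:ℝ)..t1, a s = J * t1 ^ 2 / 2 := by
    rw [intervalIntegral.integral_congr (g := fun s => J * s)
        (by rw [uIcc_of_le ht1.le]; exact haeq1)]
    rw [intervalIntegral.integral_const_mul, integral_id]
    ring
  have i2 : ∫ s in t1..t2, a s = J * t1 * (t2 - t1) := by
    rw [intervalIntegral.integral_congr (g := fun _ => J * t1)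
        (by rw [uIcc_of_le h12]; exact haeq2)]
    rw [intervalIntegral.integral_const]
    simp [smul_eq_mul]; ring
  have i3 : ∫ s in t2..(t1 + t2), a s = J * t1 ^ 2 / 2 := by
    rw [intervalIntegral.integral_congr (g := fun s => J * (t1 + t2) - J * s)
        (by rw [uIcc_of_le (by linarith : t2 ≤ t1 + t2)]
            intro u hu; rw [haeq3 u hu]; ring)]
    have hsub : ∫ x in t2..(t1 + t2), (J * (t1 + t2) - J * x) =
        (∫ x in t2..(t1 + t2), J * (t1 + t2)) - ∫ x in t2..(t1 + t2), J * x :=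
      intervalIntegral.integral_sub (_root_.intervalIntegrable_const (c := J * (t1 + t2)))
        ((by fun_prop : Continuous fun s : ℝ => J * s).intervalIntegrable _ _)
    rw [hsub, intervalIntegral.integral_const, intervalIntegral.integral_const_mul, integral_id]
    simp only [smul_eq_mul]
    ring
  have hint : ∫ s in (0:ℝ)..(t1 + t2), a s = ve - vs := by
    have a1 : (∫ s in (0:ℝ)..t1, a s) + ∫ s in t1..t2, a s = ∫ s in (0:ℝ)..t2, a s :=
      intervalIntegral.integral_add_adjacent_intervals
        (ha_cont.intervalIntegrable 0 t1) (ha_cont.intervalIntegrable t1 t2)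
    have a2 : (∫ s in (0:ℝ)..t2, a s) + ∫ s in t2..(t1+t2), a s = ∫ s in (0:ℝ)..(t1+t2), a s :=
      intervalIntegral.integral_add_adjacent_intervals
        (ha_cont.intervalIntegrable 0 t2) (ha_cont.intervalIntegrable t2 (t1 + t2))
    rw [← a2, ← a1, i1, i2, i3, ← harea]
    ring
  refine ⟨hT, v, a, hv, by simp [hv_def], ?_, ?_, ?_, ?_, ?_⟩
  · rw [hv_def]; simp only [hint]; ring
  · show max 0 (min (J * t1) (min (J * 0) (J * (t1 + t2 - 0)))) = 0
    rw [mul_zero, min_eq_left (mul_nonneg hJ.le (by linarith : (0:ℝ) ≤ t1 + t2 - 0)),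
      min_eq_right (mul_nonneg hJ.le ht1.le), max_self]
  · show max 0 (min (J * t1) (min (J * (t1 + t2)) (J * (t1 + t2 - (t1 + t2))))) = 0
    rw [sub_self, mul_zero, min_eq_right (mul_nonneg hJ.le hT.le),
      min_eq_right (mul_nonneg hJ.le ht1.le), max_self]
  · intro t _
    exact ⟨le_max_left _ _, max_le hA.le ((min_le_left _ _).trans hpa)⟩
  · refine ⟨{0, t1, t2, t1 + t2}, ?_⟩
    intro t htS
    simp only [Finset.mem_insert, Finset.mem_singleton] at htS
    push_neg at htS
    obtain ⟨h0, h1, h2, hTt⟩ := htS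
    rcases h0.lt_or_gt with hlt | hgt
    · refine ⟨0, by simp, (hasDerivAt_const t 0).congr_of_eventuallyEq ?_⟩
      filter_upwards [Iio_mem_nhds hlt] with u hu
      show max 0 (min (J * t1) (min (J * u) (J * (t1 + t2 - u)))) = 0
      have hu' : u < 0 := hu
      rw [min_eq_left (mul_le_mul_of_nonneg_left (by linarith : u ≤ t1 + t2 - u) hJ.le),
        min_eq_right (mul_le_mul_of_nonneg_left (by linarith : u ≤ t1) hJ.le),
        max_eq_left (mul_nonpos_of_nonneg_of_nonpos hJ.le hu'.le)]
    · rcases h1.lt_or_gt with hlt1 | hgt1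
      · refine ⟨J, by simp, (hJt t).congr_of_eventuallyEq ?_⟩
        filter_upwards [Ioo_mem_nhds hgt hlt1] with u hu
        exact haeq1 u ⟨hu.1.le, hu.2.le⟩
      · rcases h2.lt_or_gt with hlt2 | hgt2
        · refine ⟨0, by simp, (hasDerivAt_const t (J * t1)).congr_of_eventuallyEq ?_⟩
          filter_upwards [Ioo_mem_nhds hgt1 hlt2] with u hu
          exact haeq2 u ⟨hu.1.le, hu.2.le⟩
        · rcases hTt.lt_or_gt with hltT | hgtT
          · refine ⟨-J, by simp, ?_⟩
            have hd : HasDerivAt (fun u => J * (t1 + t2 - u)) (-J) t := by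
              have := ((hasDerivAt_id t).const_sub (t1 + t2)).const_mul J
              exact this.congr_deriv (by simp)
            refine hd.congr_of_eventuallyEq ?_
            filter_upwards [Ioo_mem_nhds hgt2 hltT] with u hu
            exact haeq3 u ⟨hu.1.le, hu.2.le⟩
          · refine ⟨0, by simp, (hasDerivAt_const t 0).congr_of_eventuallyEq ?_⟩
            filter_upwards [Ioi_mem_nhds hgtT] with u hu
            show max 0 (min (J * t1) (min (J * u) (J * (t1 + t2 - u)))) = 0
            have hu' : t1 + t2 < u := hu
            rw [min_eq_right (mul_le_mul_of_nonneg_left (by linarith : t1 + t2 - u ≤ u) hJ.le),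
              min_eq_right (mul_le_mul_of_nonneg_left (by linarith : t1 + t2 - u ≤ t1) hJ.le),
              max_eq_left (mul_nonpos_of_nonneg_of_nonpos hJ.le (by linarith))]

/-- Minimum time for a 7-segment S-curve velocity profile with piecewise-constant
jerk in `{J, 0, -J}`, accelerating from rest acceleration `v_s` to `v_e` with
acceleration bounded by `A`. -/
theorem scurve_min_time (A J vs ve : ℝ) (hA : 0 < A) (hJ : 0 < J)
    (hdv : 0 < ve - vs) :
    sInf {T : ℝ | 0 < T ∧ ∃ v a : ℝ → ℝ,
      (∀ t, HasDerivAt v (a t) t) ∧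
      v 0 = vs ∧ v T = ve ∧ a 0 = 0 ∧ a T = 0 ∧
      (∀ t ∈ Icc (0 : ℝ) T, 0 ≤ a t ∧ a t ≤ A) ∧
      (∃ S : Finset ℝ, ∀ t ∉ S, ∃ j ∈ ({-J, 0, J} : Set ℝ), HasDerivAt a j t)} =
    (if A ^ 2 / J ≤ ve - vs then (ve - vs) / A + A / J
     else 2 * Real.sqrt ((ve - vs) / J)) := by
  have hbdd : BddBelow {T : ℝ | 0 < T ∧ ∃ v a : ℝ → ℝ,
      (∀ t, HasDerivAt v (a t) t) ∧
      v 0 = vs ∧ v T = ve ∧ a 0 = 0 ∧ a T = 0 ∧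
      (∀ t ∈ Icc (0 : ℝ) T, 0 ≤ a t ∧ a t ≤ A) ∧
      (∃ S : Finset ℝ, ∀ t ∉ S, ∃ j ∈ ({-J, 0, J} : Set ℝ), HasDerivAt a j t)} :=
    ⟨0, fun T hT => hT.1.le⟩
  have hlb : ∀ T ∈ {T : ℝ | 0 < T ∧ ∃ v a : ℝ → ℝ,
      (∀ t, HasDerivAt v (a t) t) ∧
      v 0 = vs ∧ v T = ve ∧ a 0 = 0 ∧ a T = 0 ∧
      (∀ t ∈ Icc (0 : ℝ) T, 0 ≤ a t ∧ a t ≤ A) ∧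
      (∃ S : Finset ℝ, ∀ t ∉ S, ∃ j ∈ ({-J, 0, J} : Set ℝ), HasDerivAt a j t)},
      (if A ^ 2 / J ≤ ve - vs then (ve - vs) / A + A / J
       else 2 * Real.sqrt ((ve - vs) / J)) ≤ T := by
    rintro T ⟨hT, v, a, hv, hv0, hvT, ha0, haT, hb, S, hjerk⟩
    exact scurve_lb A J vs ve T hA hJ hdv hT v a hv hv0 hvT ha0 haT hb S hjerk
  have hmem : (if A ^ 2 / J ≤ ve - vs then (ve - vs) / A + A / J
      else 2 * Real.sqrt ((ve - vs) / J)) ∈ {T : ℝ | 0 < T ∧ ∃ v a : ℝ → ℝ,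
      (∀ t, HasDerivAt v (a t) t) ∧
      v 0 = vs ∧ v T = ve ∧ a 0 = 0 ∧ a T = 0 ∧
      (∀ t ∈ Icc (0 : ℝ) T, 0 ≤ a t ∧ a t ≤ A) ∧
      (∃ S : Finset ℝ, ∀ t ∉ S, ∃ j ∈ ({-J, 0, J} : Set ℝ), HasDerivAt a j t)} := by
    split_ifs with hcase
    · have h12 : A / J ≤ (ve - vs) / A := by
        rw [div_le_div_iff₀ hJ hA]
        nlinarith [(div_le_iff₀ hJ).1 hcase]
      have hpa : J * (A / J) ≤ A := by
        rw [mul_div_cancel₀ _ (ne_of_gt hJ)]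
      have harea : J * (A / J) * ((ve - vs) / A) = ve - vs := by
        field_simp
      have hprof := scurve_profile A J vs ve (A / J) ((ve - vs) / A) hA hJ
        (div_pos hA hJ) h12 hpa harea
      have heq : (ve - vs) / A + A / J = A / J + (ve - vs) / A := by ring
      rw [heq]
      exact hprof
    · set r := Real.sqrt ((ve - vs) / J) with hr
      have hrpos : 0 < r := Real.sqrt_pos.2 (div_pos hdv hJ)
      have hrr : r * r = (ve - vs) / J := Real.mul_self_sqrt (div_nonneg hdv.le hJ.le)
      have hpa : J * r ≤ A := by
        have h0 : ve - vs ≤ A ^ 2 / J := (not_le.1 hcase).le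
        have h1 : (ve - vs) / J ≤ (A / J) ^ 2 := by
          rw [div_pow, div_le_div_iff₀ hJ (pow_pos hJ 2)]
          nlinarith [(le_div_iff₀ hJ).1 h0, hJ.le]
        have h2 : r ≤ A / J := by
          rw [hr, show A / J = Real.sqrt ((A / J) ^ 2) from
            (Real.sqrt_sq (div_pos hA hJ).le).symm]
          exact Real.sqrt_le_sqrt h1
        calc J * r ≤ J * (A / J) := by nlinarith [hJ.le]
          _ = A := by field_simp
      have harea : J * r * r = ve - vs := by
        rw [mul_assoc, hrr]
        field_simp
      have hprof := scurve_profile A J vs ve r r hA hJ hrpos le_rfl hpa harea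
      rw [two_mul]
      exact hprof
  exact le_antisymm (csInf_le hbdd hmem) (le_csInf ⟨_, hmem⟩ hlb)
end

section
/- Let γ : [0,L] → ℝ² be a C² arc-length-parametrized curve with curvature κ(s) satisfying |κ(s)| ≤ κ_max. If a chord connects γ(s₀) and γ(s₀ + Δs) with Δs ≤ π/κ_max, then the maximum distance (chord error) from the arc to the chord is at most (1 - cos(κ_max·Δs/2))/κ_max. -/
open Set Metric Real intervalIntegral RealInnerProductSpace

private lemma antitone_arccos' : Antitone Real.arccos := by
  intro x y h
  simp only [Real.arccos]
  have := Real.monotone_arcsin h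
  linarith

private lemma arccos_inner_triangle {V : Type*} [NormedAddCommGroup V] [InnerProductSpace ℝ V]
    (x y z : V) (hx : ‖x‖ = 1) (hy : ‖y‖ = 1) (hz : ‖z‖ = 1) :
    Real.arccos ⟪x, z⟫ ≤ Real.arccos ⟪x, y⟫ + Real.arccos ⟪y, z⟫ := by
  have ha1 : |⟪x, y⟫| ≤ 1 := by
    have := abs_real_inner_le_norm x y; rwa [hx, hy, one_mul] at this
  have hb1 : |⟪y, z⟫| ≤ 1 := by
    have := abs_real_inner_le_norm y z; rwa [hy, hz, one_mul] at this
  rcases le_or_gt (Real.arccos ⟪x, y⟫ + Real.arccos ⟪y, z⟫) Real.pi with hAB | hAB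
  · have hyy : ⟪y, y⟫ = (1:ℝ) := by
      rw [real_inner_self_eq_norm_sq, hy]; norm_num
    have hxx : ⟪x, x⟫ = (1:ℝ) := by
      rw [real_inner_self_eq_norm_sq, hx]; norm_num
    have hzz : ⟪z, z⟫ = (1:ℝ) := by
      rw [real_inner_self_eq_norm_sq, hz]; norm_num
    have hvy : ⟪x - ⟪x, y⟫ • y, y⟫ = 0 := by
      simp [inner_sub_left, real_inner_smul_left, hyy, hy]
    have hyw : ⟪y, z - ⟪y, z⟫ • y⟫ = 0 := by
      simp [inner_sub_right, real_inner_smul_right, hyy, hy]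
    have hvn : ‖x - ⟪x, y⟫ • y‖ = Real.sqrt (1 - ⟪x, y⟫ ^ 2) := by
      have h2 : ‖x - ⟪x, y⟫ • y‖ ^ 2 = 1 - ⟪x, y⟫ ^ 2 := by
        rw [← real_inner_self_eq_norm_sq]
        simp only [inner_sub_left, inner_sub_right, real_inner_smul_left,
          real_inner_smul_right, hyy, hxx, real_inner_comm y x]
        ring
      rw [← h2, Real.sqrt_sq (norm_nonneg _)]
    have hwn : ‖z - ⟪y, z⟫ • y‖ = Real.sqrt (1 - ⟪y, z⟫ ^ 2) := by
      have h2 : ‖z - ⟪y, z⟫ • y‖ ^ 2 = 1 - ⟪y, z⟫ ^ 2 := by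
        rw [← real_inner_self_eq_norm_sq]
        simp only [inner_sub_left, inner_sub_right, real_inner_smul_left,
          real_inner_smul_right, hyy, hzz, real_inner_comm z y]
        ring
      rw [← h2, Real.sqrt_sq (norm_nonneg _)]
    have hxz : ⟪x, z⟫ = ⟪x - ⟪x, y⟫ • y, z - ⟪y, z⟫ • y⟫ + ⟪x, y⟫ * ⟪y, z⟫ := by
      simp only [inner_sub_left, inner_sub_right, real_inner_smul_left,
        real_inner_smul_right, hyy, real_inner_comm y x]
      ring
    have hvw : -(‖x - ⟪x, y⟫ • y‖ * ‖z - ⟪y, z⟫ • y‖) ≤ ⟪x - ⟪x, y⟫ • y, z - ⟪y, z⟫ • y⟫ := by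
      have := abs_real_inner_le_norm (x - ⟪x, y⟫ • y) (z - ⟪y, z⟫ • y)
      rw [abs_le] at this; exact this.1
    have hkey : Real.cos (Real.arccos ⟪x, y⟫ + Real.arccos ⟪y, z⟫) ≤ ⟪x, z⟫ := by
      rw [Real.cos_add, Real.cos_arccos (neg_le_of_abs_le ha1) (le_of_abs_le ha1),
        Real.cos_arccos (neg_le_of_abs_le hb1) (le_of_abs_le hb1),
        Real.sin_arccos, Real.sin_arccos, hxz]
      rw [hvn, hwn] at hvw
      linarith
    calc Real.arccos ⟪x, z⟫
        ≤ Real.arccos (Real.cos (Real.arccos ⟪x, y⟫ + Real.arccos ⟪y, z⟫)) :=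
          antitone_arccos' hkey
      _ = _ := Real.arccos_cos
          (add_nonneg (Real.arccos_nonneg _) (Real.arccos_nonneg _)) hAB
  · calc Real.arccos ⟪x, z⟫ ≤ Real.pi := Real.arccos_le_pi _
      _ ≤ _ := hAB.le

private lemma arccos_inner_le_lip {V : Type*} [NormedAddCommGroup V] [InnerProductSpace ℝ V]
    (κ : ℝ) (hκ : 0 < κ) (f : ℝ → V)
    (hunit : ∀ s, ‖f s‖ = 1) (hlip : ∀ t u : ℝ, ‖f t - f u‖ ≤ κ * |t - u|) :
    ∀ u t : ℝ, u ≤ t → Real.arccos ⟪f t, f u⟫ ≤ κ * (t - u) := by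
  have hip1 : ∀ p q : ℝ, |⟪f p, f q⟫| ≤ 1 := by
    intro p q
    have := abs_real_inner_le_norm (f p) (f q); rwa [hunit, hunit, one_mul] at this
  have hself : ∀ p : ℝ, ⟪f p, f p⟫ = (1:ℝ) := by
    intro p; rw [real_inner_self_eq_norm_sq, hunit]; norm_num
  have hstep : ∀ p q : ℝ, Real.arccos ⟪f p, f q⟫ ≤ 2 * Real.arcsin (κ * |p - q| / 2) := by
    intro p q
    have hip : 1 - (κ * |p - q|) ^ 2 / 2 ≤ ⟪f p, f q⟫ := by
      have h1 := hlip p q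
      have h2 : ‖f p - f q‖ ^ 2 = 2 - 2 * ⟪f p, f q⟫ := by
        rw [norm_sub_sq_real, hunit, hunit]; ring
      have h6 : ‖f p - f q‖ ^ 2 ≤ (κ * |p - q|) ^ 2 :=
        pow_le_pow_left₀ (norm_nonneg _) h1 2
      linarith
    have hφmem : Real.arccos ⟪f p, f q⟫ / 2 ∈ Icc 0 (Real.pi / 2) :=
      ⟨div_nonneg (Real.arccos_nonneg _) (by norm_num),
        by linarith [Real.arccos_le_pi ⟪f p, f q⟫]⟩
    have hsin : Real.sin (Real.arccos ⟪f p, f q⟫ / 2) ≤ κ * |p - q| / 2 := by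
      have hs2 : Real.sin (Real.arccos ⟪f p, f q⟫ / 2) ^ 2 = (1 - ⟪f p, f q⟫) / 2 := by
        rw [Real.sin_sq_eq_half_sub]
        rw [show 2 * (Real.arccos ⟪f p, f q⟫ / 2) = Real.arccos ⟪f p, f q⟫ by ring,
          Real.cos_arccos (neg_le_of_abs_le (hip1 p q)) (le_of_abs_le (hip1 p q))]
        ring
      have hsnn : 0 ≤ Real.sin (Real.arccos ⟪f p, f q⟫ / 2) :=
        Real.sin_nonneg_of_nonneg_of_le_pi hφmem.1 (by linarith [hφmem.2, Real.pi_pos])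
      nlinarith [abs_nonneg (p - q), mul_nonneg hκ.le (abs_nonneg (p - q))]
    calc Real.arccos ⟪f p, f q⟫
        = 2 * Real.arcsin (Real.sin (Real.arccos ⟪f p, f q⟫ / 2)) := by
          rw [Real.arcsin_sin (by linarith [hφmem.1, Real.pi_pos]) hφmem.2]; ring
      _ ≤ 2 * Real.arcsin (κ * |p - q| / 2) := by
          have := Real.monotone_arcsin hsin; linarith
  have hiter : ∀ (u h : ℝ), 0 ≤ h → ∀ k : ℕ,
      Real.arccos ⟪f (u + k * h), f u⟫ ≤ k * (2 * Real.arcsin (κ * h / 2)) := by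
    intro u h hh k
    induction k with
    | zero => simp [hself, hunit]
    | succ k ih =>
      have htri := arccos_inner_triangle (f (u + (k+1) * h)) (f (u + k * h)) (f u)
        (hunit _) (hunit _) (hunit _)
      have hst := hstep (u + (k+1) * h) (u + k * h)
      have habs : |u + (k+1) * h - (u + k * h)| = h := by
        rw [show u + (k+1) * h - (u + k * h) = h by push_cast; ring, abs_of_nonneg hh]
      rw [habs] at hst
      push_cast
      push_cast at ih
      linarith
  intro u t hut
  rcases eq_or_lt_of_le hut with rfl | hlt
  · simp [hself, hunit, Real.arccos_one]
  · set d := t - u with hd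
    have hdpos : 0 < d := by simp [hd]; linarith
    set c := κ * d with hc
    have hcpos : 0 < c := mul_pos hκ hdpos
    set x : ℕ → ℝ := fun n => c / (2 * (n + 1)) with hx
    have hxpos : ∀ n, 0 < x n := by
      intro n; apply div_pos hcpos; positivity
    have hbound : ∀ n : ℕ, Real.arccos ⟪f t, f u⟫ ≤ (n+1 : ℝ) * (2 * Real.arcsin (x n)) := by
      intro n
      have hne : ((n:ℝ) + 1) ≠ 0 := by positivity
      have ht' : t = u + ((n+1 : ℕ) : ℝ) * (d / (n+1)) := by
        push_cast
        field_simp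
        rw [hd]
        ring
      have hxn : x n = κ * (d / (n+1)) / 2 := by
        show c / (2 * ((n:ℝ) + 1)) = κ * (d / ((n:ℝ)+1)) / 2
        have h2 : (2:ℝ) * ((n:ℝ) + 1) ≠ 0 := by positivity
        field_simp
        exact hc
      have := hiter u (d / (n+1)) (by positivity) (n+1)
      rw [← ht'] at this
      rw [hxn]
      push_cast at this ⊢
      linarith
    have hlim : Filter.Tendsto (fun n : ℕ => (n+1 : ℝ) * (2 * Real.arcsin (x n)))
        Filter.atTop (nhds c) := by
      have hx0 : Filter.Tendsto x Filter.atTop (nhds 0) := by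
        have h1 : Filter.Tendsto (fun n : ℕ => (c/2) / ((n:ℝ)+1)) Filter.atTop (nhds 0) := by
          have h2 := (tendsto_const_div_atTop_nhds_zero_nat (c/2)).comp
            (Filter.tendsto_add_atTop_nat 1)
          refine h2.congr fun n => ?_
          simp only [Function.comp]
          push_cast
          ring
        refine h1.congr fun n => ?_
        rw [hx, div_div]
      have hslope : Filter.Tendsto (fun n => Real.arcsin (x n) / x n)
          Filter.atTop (nhds 1) := by
        have hd0 : HasDerivAt Real.arcsin 1 0 := by
          have := Real.hasDerivAt_arcsin (by norm_num : (0:ℝ) ≠ -1) (by norm_num : (0:ℝ) ≠ 1)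
          simpa using this
        have hs := hasDerivAt_iff_tendsto_slope.mp hd0
        have hcomp : Filter.Tendsto x Filter.atTop (nhdsWithin 0 {(0:ℝ)}ᶜ) :=
          tendsto_nhdsWithin_of_tendsto_nhds_of_eventually_within x hx0
            (Filter.Eventually.of_forall fun n => (hxpos n).ne')
        have := hs.comp hcomp
        refine this.congr fun n => ?_
        simp [slope_def_field, Real.arcsin_zero]
      have hmul : Filter.Tendsto (fun n : ℕ => c * (Real.arcsin (x n) / x n))
          Filter.atTop (nhds (c * 1)) := hslope.const_mul c
      rw [mul_one] at hmul
      refine hmul.congr fun n => ?_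
      have hxn := (hxpos n).ne'
      rw [hx]
      field_simp
    exact ge_of_tendsto hlim (Filter.Eventually.of_forall hbound)

private lemma cos_int_aux (κ u p q : ℝ) (hκ : κ ≠ 0) :
    ∫ t in p..q, Real.cos (κ * (t - u)) =
      (Real.sin (κ * (q - u)) - Real.sin (κ * (p - u))) / κ := by
  have h : ∀ t ∈ uIcc p q, HasDerivAt (fun t => Real.sin (κ * (t - u)) / κ)
      (Real.cos (κ * (t - u))) t := by
    intro t _
    have h1 : HasDerivAt (fun t : ℝ => κ * (t - u)) κ t := by
      simpa using ((hasDerivAt_id t).sub_const u).const_mul κ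
    have h2 := ((Real.hasDerivAt_sin (κ * (t - u))).comp t h1).div_const κ
    refine h2.congr_deriv ?_
    field_simp
  rw [integral_eq_sub_of_hasDerivAt h
    ((Continuous.intervalIntegrable (by continuity) p q))]
  ring

private lemma sin_int_left_aux (κ p q : ℝ) (hκ : κ ≠ 0) :
    ∫ t in p..q, Real.sin (κ * (q - t)) = (1 - Real.cos (κ * (q - p))) / κ := by
  have h : ∀ t ∈ uIcc p q, HasDerivAt (fun t => Real.cos (κ * (q - t)) / κ)
      (Real.sin (κ * (q - t))) t := by
    intro t _
    have h1 : HasDerivAt (fun t : ℝ => κ * (q - t)) (-κ) t := by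
      simpa using ((hasDerivAt_id t).const_sub q).const_mul κ
    have h2 := ((Real.hasDerivAt_cos (κ * (q - t))).comp t h1).div_const κ
    refine h2.congr_deriv ?_
    field_simp
  rw [integral_eq_sub_of_hasDerivAt h
    ((Continuous.intervalIntegrable (by continuity) p q))]
  simp
  ring

private lemma sin_int_right_aux (κ p q : ℝ) (hκ : κ ≠ 0) :
    ∫ t in p..q, Real.sin (κ * (t - p)) = (1 - Real.cos (κ * (q - p))) / κ := by
  have h : ∀ t ∈ uIcc p q, HasDerivAt (fun t => -(Real.cos (κ * (t - p)) / κ))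
      (Real.sin (κ * (t - p))) t := by
    intro t _
    have h1 : HasDerivAt (fun t : ℝ => κ * (t - p)) κ t := by
      simpa using ((hasDerivAt_id t).sub_const p).const_mul κ
    have h2 := (((Real.hasDerivAt_cos (κ * (t - p))).comp t h1).div_const κ).neg
    refine h2.congr_deriv ?_
    field_simp
  rw [integral_eq_sub_of_hasDerivAt h
    ((Continuous.intervalIntegrable (by continuity) p q))]
  simp
  ring

private lemma exists_normal_aux (e : EuclideanSpace ℝ (Fin 2)) (he : ‖e‖ = 1) :
    ∃ n : EuclideanSpace ℝ (Fin 2), ⟪e, n⟫ = 0 ∧ ‖n‖ = 1 ∧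
      ∀ x : EuclideanSpace ℝ (Fin 2), x = ⟪x, e⟫ • e + ⟪x, n⟫ • n := by
  have hee : ⟪e, e⟫ = 1 := by
    rw [real_inner_self_eq_norm_sq, he]; norm_num
  have hee' : e 0 * e 0 + e 1 * e 1 = 1 := by
    have := hee; rw [PiLp.inner_apply] at this
    simp [Fin.sum_univ_two, RCLike.inner_apply, conj_trivial] at this
    linear_combination this
  set n : EuclideanSpace ℝ (Fin 2) := !₂[-(e 1), e 0] with hn
  have hn0 : n 0 = -(e 1) := rfl
  have hn1 : n 1 = e 0 := rfl
  refine ⟨n, ?_, ?_, ?_⟩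
  · simp [PiLp.inner_apply, Fin.sum_univ_two, RCLike.inner_apply, conj_trivial, hn0, hn1]
    ring
  · have h1 : ⟪n, n⟫ = 1 := by
      rw [PiLp.inner_apply]
      simp [Fin.sum_univ_two, RCLike.inner_apply, conj_trivial, hn0, hn1]
      linear_combination hee'
    have h2 := real_inner_self_eq_norm_sq n
    nlinarith [norm_nonneg n]
  · intro x
    ext i
    fin_cases i
    · simp [PiLp.inner_apply, Fin.sum_univ_two, RCLike.inner_apply, conj_trivial,
        PiLp.add_apply, PiLp.smul_apply, smul_eq_mul, hn0, hn1]
      linear_combination (-(x 0)) * hee'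
    · simp [PiLp.inner_apply, Fin.sum_univ_two, RCLike.inner_apply, conj_trivial,
        PiLp.add_apply, PiLp.smul_apply, smul_eq_mul, hn0, hn1]
      linear_combination (-(x 1)) * hee'

set_option maxHeartbeats 2000000 in
private theorem chord_aux (κmax a b : ℝ) (hκ : 0 < κmax)
    (hab : a ≤ b) (hπ : κmax * (b - a) ≤ Real.pi)
    (γ γ' γ'' : ℝ → EuclideanSpace ℝ (Fin 2))
    (hd1 : ∀ s, HasDerivAt γ (γ' s) s)
    (hd2 : ∀ s, HasDerivAt γ' (γ'' s) s)
    (hunit : ∀ s, ‖γ' s‖ = 1)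
    (hcurv : ∀ s, ‖γ'' s‖ ≤ κmax) :
    ∀ s ∈ Icc a b,
      infDist (γ s) (segment ℝ (γ a) (γ b)) ≤
        (1 - Real.cos (κmax * (b - a) / 2)) / κmax := by
  intro s hs
  have hdiffγ' : Differentiable ℝ γ' := fun t => (hd2 t).differentiableAt
  have hcontγ' : Continuous γ' := hdiffγ'.continuous
  have hdiffγ : Differentiable ℝ γ := fun t => (hd1 t).differentiableAt
  have hγcont : Continuous γ := hdiffγ.continuous
  have hcontin : ∀ w : EuclideanSpace ℝ (Fin 2),
      Continuous fun t => ⟪γ' t, w⟫ := fun w =>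
    (continuous_inner.comp (hcontγ'.prodMk continuous_const) : _)
  have hInt : ∀ (w : EuclideanSpace ℝ (Fin 2)) (p q : ℝ),
      IntervalIntegrable (fun t => ⟪γ' t, w⟫) MeasureTheory.volume p q :=
    fun w p q => (hcontin w).intervalIntegrable p q
  have hip1 : ∀ p q : ℝ, |⟪γ' p, γ' q⟫| ≤ 1 := by
    intro p q
    have := abs_real_inner_le_norm (γ' p) (γ' q); rwa [hunit, hunit, one_mul] at this
  have hlip : ∀ t u : ℝ, ‖γ' t - γ' u‖ ≤ κmax * |t - u| := by
    intro t u
    have := Convex.norm_image_sub_le_of_norm_hasDerivWithin_le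
      (f := γ') (f' := γ'') (s := univ) (C := κmax)
      (fun x _ => (hd2 x).hasDerivWithinAt) (fun x _ => hcurv x)
      convex_univ (mem_univ u) (mem_univ t)
    simpa [Real.norm_eq_abs] using this
  have hcos : ∀ t u : ℝ, κmax * |t - u| ≤ Real.pi →
      Real.cos (κmax * (t - u)) ≤ ⟪γ' t, γ' u⟫ := by
    intro t u hle
    have hA : Real.arccos ⟪γ' t, γ' u⟫ ≤ κmax * |t - u| := by
      rcases le_total u t with h | h
      · have := arccos_inner_le_lip κmax hκ γ' hunit hlip u t h
        rwa [abs_of_nonneg (by linarith : (0:ℝ) ≤ t - u)]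
      · have := arccos_inner_le_lip κmax hκ γ' hunit hlip t u h
        rw [real_inner_comm] at this
        rwa [abs_of_nonpos (by linarith : t - u ≤ 0), neg_sub]
    have h1 : Real.cos (κmax * |t - u|) ≤ Real.cos (Real.arccos ⟪γ' t, γ' u⟫) :=
      Real.cos_le_cos_of_nonneg_of_le_pi (Real.arccos_nonneg _) hle hA
    rw [Real.cos_arccos (neg_le_of_abs_le (hip1 t u)) (le_of_abs_le (hip1 t u))] at h1
    rwa [← Real.cos_abs (κmax * (t - u)), abs_mul, abs_of_pos hκ]
  have hftc : ∀ (w : EuclideanSpace ℝ (Fin 2)) (p q : ℝ),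
      ⟪γ q - γ p, w⟫ = ∫ t in p..q, ⟪γ' t, w⟫ := by
    intro w p q
    have hder : ∀ t ∈ uIcc p q, HasDerivAt (fun t => ⟪γ t, w⟫) (⟪γ' t, w⟫) t := by
      intro t _
      simpa using (HasDerivAt.inner ℝ (hd1 t) (hasDerivAt_const t w))
    rw [integral_eq_sub_of_hasDerivAt hder (hInt w p q), inner_sub_left]
  rcases eq_or_lt_of_le hab with rfl | hab'
  · have hsa : s = a := le_antisymm hs.2 hs.1
    rw [hsa, show κmax * (a - a) / 2 = 0 by ring, Real.cos_zero]
    have h0 : infDist (γ a) (segment ℝ (γ a) (γ a)) ≤ dist (γ a) (γ a) :=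
      infDist_le_dist_of_mem (left_mem_segment ℝ (γ a) (γ a))
    simpa using h0
  · -- main case  a < b
    have hsinsum : ∀ t ∈ Icc a b,
        (Real.sin (κmax * (t - a)) + Real.sin (κmax * (b - t))) / κmax ≤
          ⟪γ b - γ a, γ' t⟫ := by
      intro t ht
      rw [hftc (γ' t) a b,
        ← intervalIntegral.integral_add_adjacent_intervals (hInt (γ' t) a t) (hInt (γ' t) t b)]
      have habs : ∀ u ∈ Icc a b, κmax * |u - t| ≤ Real.pi := by
        intro u hu
        have h1 : |u - t| ≤ b - a := by
          rw [abs_le]; constructor <;> [linarith [hu.1, ht.2]; linarith [hu.2, ht.1]]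
        calc κmax * |u - t| ≤ κmax * (b - a) := by
              apply mul_le_mul_of_nonneg_left h1 hκ.le
          _ ≤ Real.pi := hπ
      have hL : Real.sin (κmax * (t - a)) / κmax ≤ ∫ u in a..t, ⟪γ' u, γ' t⟫ := by
        have hcal : ∫ u in a..t, Real.cos (κmax * (u - t)) =
            Real.sin (κmax * (t - a)) / κmax := by
          rw [cos_int_aux κmax t a t hκ.ne']
          rw [show κmax * (t - t) = 0 by ring, show κmax * (a - t) = -(κmax * (t - a)) by ring]
          simp [Real.sin_neg]
        rw [← hcal]
        apply intervalIntegral.integral_mono_on ht.1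
          ((Real.continuous_cos.comp (continuous_const.mul
            (continuous_id.sub continuous_const))).intervalIntegrable a t)
          (hInt (γ' t) a t)
        intro u hu
        exact hcos u t (habs u ⟨hu.1, le_trans hu.2 ht.2⟩)
      have hR : Real.sin (κmax * (b - t)) / κmax ≤ ∫ u in t..b, ⟪γ' u, γ' t⟫ := by
        have hcal : ∫ u in t..b, Real.cos (κmax * (u - t)) =
            Real.sin (κmax * (b - t)) / κmax := by
          rw [cos_int_aux κmax t t b hκ.ne']
          rw [show κmax * (t - t) = 0 by ring]
          simp
        rw [← hcal]
        apply intervalIntegral.integral_mono_on ht.2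
          ((Real.continuous_cos.comp (continuous_const.mul
            (continuous_id.sub continuous_const))).intervalIntegrable t b)
          (hInt (γ' t) t b)
        intro u hu
        exact hcos u t (habs u ⟨le_trans ht.1 hu.1, hu.2⟩)
      have heq : (Real.sin (κmax * (t - a)) + Real.sin (κmax * (b - t))) / κmax =
          Real.sin (κmax * (t - a)) / κmax + Real.sin (κmax * (b - t)) / κmax := by ring
      rw [heq]
      exact add_le_add hL hR
    have hsinnn : ∀ t ∈ Icc a b, 0 ≤ ⟪γ b - γ a, γ' t⟫ := by
      intro t ht
      refine le_trans ?_ (hsinsum t ht)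
      apply div_nonneg _ hκ.le
      have h1 : 0 ≤ Real.sin (κmax * (t - a)) := by
        apply Real.sin_nonneg_of_nonneg_of_le_pi
        · exact mul_nonneg hκ.le (by linarith [ht.1])
        · calc κmax * (t - a) ≤ κmax * (b - a) := mul_le_mul_of_nonneg_left (by linarith [ht.2]) hκ.le
            _ ≤ Real.pi := hπ
      have h2 : 0 ≤ Real.sin (κmax * (b - t)) := by
        apply Real.sin_nonneg_of_nonneg_of_le_pi
        · exact mul_nonneg hκ.le (by linarith [ht.2])
        · calc κmax * (b - t) ≤ κmax * (b - a) := mul_le_mul_of_nonneg_left (by linarith [ht.1]) hκ.le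
            _ ≤ Real.pi := hπ
      linarith
    have hC : 2 * Real.sin (κmax * (b - a) / 2) / κmax ≤ ‖γ b - γ a‖ := by
      have hm : a + (b - a) / 2 ∈ Icc a b := ⟨by linarith, by linarith⟩
      have h1 := hsinsum _ hm
      have h2 : ⟪γ b - γ a, γ' (a + (b - a) / 2)⟫ ≤ ‖γ b - γ a‖ := by
        have := real_inner_le_norm (γ b - γ a) (γ' (a + (b - a) / 2))
        rwa [hunit, mul_one] at this
      rw [show κmax * (a + (b - a) / 2 - a) = κmax * (b - a) / 2 by ring,
        show κmax * (b - (a + (b - a) / 2)) = κmax * (b - a) / 2 by ring] at h1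
      calc 2 * Real.sin (κmax * (b - a) / 2) / κmax
          = (Real.sin (κmax * (b - a) / 2) + Real.sin (κmax * (b - a) / 2)) / κmax := by ring
        _ ≤ ⟪γ b - γ a, γ' (a + (b - a) / 2)⟫ := h1
        _ ≤ ‖γ b - γ a‖ := h2
    have hCpos : 0 < ‖γ b - γ a‖ := by
      refine lt_of_lt_of_le ?_ hC
      apply div_pos _ hκ
      have hsp : 0 < Real.sin (κmax * (b - a) / 2) := by
        apply Real.sin_pos_of_pos_of_lt_pi
        · have h1 : 0 < b - a := by linarith
          positivity
        · have := Real.pi_pos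
          have h0 : 0 ≤ κmax * (b - a) := mul_nonneg hκ.le (by linarith)
          linarith
      linarith
    obtain ⟨e, he⟩ : ∃ e : EuclideanSpace ℝ (Fin 2),
        e = ‖γ b - γ a‖⁻¹ • (γ b - γ a) := ⟨_, rfl⟩
    have hve : γ b - γ a = ‖γ b - γ a‖ • e := by
      rw [he, smul_smul, mul_inv_cancel₀ hCpos.ne', one_smul]
    have he1 : ‖e‖ = 1 := by
      rw [he, norm_smul, norm_inv, norm_norm, inv_mul_cancel₀ hCpos.ne']
    obtain ⟨n, hen, hn1, hdecomp⟩ := exists_normal_aux e he1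
    have hee : ⟪e, e⟫ = (1:ℝ) := by rw [real_inner_self_eq_norm_sq, he1]; norm_num
    have hsq : ∀ x : EuclideanSpace ℝ (Fin 2), ⟪x, e⟫ ^ 2 + ⟪x, n⟫ ^ 2 = ‖x‖ ^ 2 := by
      intro x
      have hx : ⟪x, x⟫ = ⟪x, ⟪x, e⟫ • e + ⟪x, n⟫ • n⟫ := by rw [← hdecomp x]
      rw [inner_add_right, real_inner_smul_right, real_inner_smul_right] at hx
      rw [← real_inner_self_eq_norm_sq, hx]
      ring
    have hgd : ∀ t, HasDerivAt (fun t => ⟪γ t - γ a, n⟫) (⟪γ' t, n⟫) t := by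
      intro t
      have := HasDerivAt.inner ℝ ((hd1 t).sub_const (γ a)) (hasDerivAt_const t n)
      simpa using this
    have hgb : ⟪γ b - γ a, n⟫ = 0 := by
      rw [hve, real_inner_smul_left, hen, mul_zero]
    have hcontg : Continuous (fun t => ⟪γ t - γ a, n⟫) :=
      (continuous_inner.comp (((hγcont.sub continuous_const)).prodMk continuous_const) : _)
    obtain ⟨s', hs'mem, hs'max⟩ := isCompact_Icc.exists_isMaxOn (nonempty_Icc.mpr hab)
      (hcontg.abs.continuousOn (s := Icc a b))
    have hπ2 : κmax * (b - a) / 2 ≤ Real.pi / 2 := by linarith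
    have hbann : 0 ≤ κmax * (b - a) := mul_nonneg hκ.le (by linarith)
    have hKB : |⟪γ s' - γ a, n⟫| ≤ (1 - Real.cos (κmax * (b - a) / 2)) / κmax := by
      rcases eq_or_ne ⟪γ s' - γ a, n⟫ 0 with hg0 | hg0
      · rw [hg0, abs_zero]
        apply div_nonneg _ hκ.le
        linarith [Real.cos_le_one (κmax * (b - a) / 2)]
      · have hsa : s' ≠ a := by
          intro h; apply hg0; rw [h]; simp
        have hsb : s' ≠ b := by
          intro h; apply hg0; rw [h]; exact hgb
        have hio : s' ∈ Ioo a b :=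
          ⟨lt_of_le_of_ne hs'mem.1 (Ne.symm hsa), lt_of_le_of_ne hs'mem.2 hsb⟩
        have hloc : IsLocalMax (fun t => ⟪γ t - γ a, n⟫ ^ 2) s' := by
          have hnhds : Icc a b ∈ nhds s' := Icc_mem_nhds hio.1 hio.2
          refine Filter.eventually_of_mem hnhds fun t ht => ?_
          have h1 := hs'max ht
          simp only [Set.mem_setOf_eq] at h1
          simp only
          nlinarith [abs_nonneg ⟪γ t - γ a, n⟫, sq_abs ⟪γ t - γ a, n⟫,
            sq_abs ⟪γ s' - γ a, n⟫, abs_nonneg ⟪γ s' - γ a, n⟫]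
        have hder2 : HasDerivAt (fun t => ⟪γ t - γ a, n⟫ ^ 2)
            (2 * ⟪γ s' - γ a, n⟫ * ⟪γ' s', n⟫) s' := by
          have := (hgd s').fun_pow 2
          simpa [pow_one] using this
        have hz := hloc.hasDerivAt_eq_zero hder2
        have hperp : ⟪γ' s', n⟫ = 0 := by
          rcases mul_eq_zero.mp hz with h | h
          · rcases mul_eq_zero.mp h with h' | h'
            · norm_num at h'
            · exact absurd h' hg0
          · exact h
        have hcs : ⟪γ' s', e⟫ ^ 2 = 1 := by
          have h1 := hsq (γ' s')
          rw [hperp, hunit] at h1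
          linarith [h1]
        have hγs' : γ' s' = ⟪γ' s', e⟫ • e := by
          have h1 := hdecomp (γ' s')
          rw [hperp, zero_smul, add_zero] at h1
          exact h1
        have hDB : ∀ t : ℝ, κmax * |t - s'| ≤ Real.pi / 2 →
            |⟪γ' t, n⟫| ≤ Real.sin (κmax * |t - s'|) := by
          intro t hts
          have hπpos := Real.pi_pos
          have hip := hcos t s' (by linarith)
          have hip' : Real.cos (κmax * |t - s'|) ≤ ⟪γ' t, γ' s'⟫ := by
            rwa [← Real.cos_abs (κmax * (t - s')), abs_mul, abs_of_pos hκ] at hip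
          have hcnn : 0 ≤ Real.cos (κmax * |t - s'|) :=
            Real.cos_nonneg_of_mem_Icc
              ⟨le_trans (by linarith : -(Real.pi/2) ≤ (0:ℝ)) (by positivity), hts⟩
          have hub : ⟪γ' t, γ' s'⟫ ≤ 1 := le_of_abs_le (hip1 t s')
          have hsplit : ⟪γ' t, e⟫ ^ 2 + ⟪γ' t, n⟫ ^ 2 = 1 := by
            have h1 := hsq (γ' t); rw [hunit] at h1; rwa [one_pow] at h1
          have hX2 : ⟪γ' t, γ' s'⟫ ^ 2 = ⟪γ' t, e⟫ ^ 2 := by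
            have h1 : ⟪γ' t, γ' s'⟫ = ⟪γ' s', e⟫ * ⟪γ' t, e⟫ := by
              conv_lhs => rw [hγs']
              rw [real_inner_smul_right]
            rw [h1, mul_pow, hcs, one_mul]
          have hsinn : 0 ≤ Real.sin (κmax * |t - s'|) :=
            Real.sin_nonneg_of_nonneg_of_le_pi (by positivity) (by linarith)
          have hpc := Real.sin_sq_add_cos_sq (κmax * |t - s'|)
          nlinarith [sq_abs ⟪γ' t, n⟫, abs_nonneg ⟪γ' t, n⟫]
        rcases le_or_gt (s' - a) ((b - a) / 2) with hcase | hcase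
        · -- integrate on [a, s']
          have hgs'eq : ⟪γ s' - γ a, n⟫ = ∫ t in a..s', ⟪γ' t, n⟫ := hftc n a s'
          have hbd : |∫ t in a..s', ⟪γ' t, n⟫| ≤
              |∫ t in a..s', Real.sin (κmax * (s' - t))| := by
            have hbd0 : ‖∫ t in a..s', ⟪γ' t, n⟫‖ ≤
                |∫ t in a..s', Real.sin (κmax * (s' - t))| := by
              refine intervalIntegral.norm_integral_le_abs_of_norm_le ?_
                ((Real.continuous_sin.comp (continuous_const.mul
                  (continuous_const.sub continuous_id))).intervalIntegrable a s')
              refine MeasureTheory.ae_restrict_of_forall_mem measurableSet_uIoc fun t ht => ?_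
              rw [Set.uIoc_of_le hs'mem.1] at ht
              have h1 : |t - s'| = s' - t := by
                rw [abs_of_nonpos (by linarith [ht.2]), neg_sub]
              have h2 : κmax * |t - s'| ≤ Real.pi / 2 := by
                rw [h1]
                calc κmax * (s' - t) ≤ κmax * ((b - a) / 2) := mul_le_mul_of_nonneg_left (by linarith [ht.1]) hκ.le
                  _ ≤ Real.pi / 2 := by linarith
              have h3 := hDB t h2
              rw [h1] at h3
              simpa [Real.norm_eq_abs] using h3
            rwa [Real.norm_eq_abs] at hbd0
          have hval : |∫ t in a..s', Real.sin (κmax * (s' - t))| =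
              (1 - Real.cos (κmax * (s' - a))) / κmax := by
            rw [sin_int_left_aux κmax a s' hκ.ne']
            apply abs_of_nonneg
            apply div_nonneg _ hκ.le
            linarith [Real.cos_le_one (κmax * (s' - a))]
          have hfin : (1 - Real.cos (κmax * (s' - a))) / κmax ≤
              (1 - Real.cos (κmax * (b - a) / 2)) / κmax := by
            have hcc : Real.cos (κmax * (b - a) / 2) ≤ Real.cos (κmax * (s' - a)) := by
              apply Real.cos_le_cos_of_nonneg_of_le_pi
              · exact mul_nonneg hκ.le (by linarith [hs'mem.1])
              · linarith
              · calc κmax * (s' - a) ≤ κmax * ((b - a) / 2) := mul_le_mul_of_nonneg_left hcase hκ.le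
                  _ = κmax * (b - a) / 2 := by ring
            exact (div_le_div_iff_of_pos_right hκ).mpr (by linarith)
          calc |⟪γ s' - γ a, n⟫| = |∫ t in a..s', ⟪γ' t, n⟫| := by rw [hgs'eq]
            _ ≤ |∫ t in a..s', Real.sin (κmax * (s' - t))| := hbd
            _ = (1 - Real.cos (κmax * (s' - a))) / κmax := hval
            _ ≤ _ := hfin
        · -- integrate on [s', b]
          have hgs'eq : ⟪γ s' - γ a, n⟫ = -(∫ t in s'..b, ⟪γ' t, n⟫) := by
            have h1 := hftc n s' b
            have h2 : ⟪γ b - γ s', n⟫ = ⟪γ b - γ a, n⟫ - ⟪γ s' - γ a, n⟫ := by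
              rw [← inner_sub_left]
              congr 1
              abel
            rw [h2, hgb] at h1
            linarith
          have hbd : |⟪γ s' - γ a, n⟫| ≤
              |∫ t in s'..b, Real.sin (κmax * (t - s'))| := by
            rw [hgs'eq, abs_neg]
            have hbd0 : ‖∫ t in s'..b, ⟪γ' t, n⟫‖ ≤
                |∫ t in s'..b, Real.sin (κmax * (t - s'))| := by
              refine intervalIntegral.norm_integral_le_abs_of_norm_le ?_
                ((Real.continuous_sin.comp (continuous_const.mul
                  (continuous_id.sub continuous_const))).intervalIntegrable s' b)
              refine MeasureTheory.ae_restrict_of_forall_mem measurableSet_uIoc fun t ht => ?_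
              rw [Set.uIoc_of_le hs'mem.2] at ht
              have h1 : |t - s'| = t - s' := abs_of_nonneg (by linarith [ht.1])
              have h2 : κmax * |t - s'| ≤ Real.pi / 2 := by
                rw [h1]
                calc κmax * (t - s') ≤ κmax * ((b - a) / 2) := mul_le_mul_of_nonneg_left (by linarith [ht.2]) hκ.le
                  _ ≤ Real.pi / 2 := by linarith
              have h3 := hDB t h2
              rw [h1] at h3
              simpa [Real.norm_eq_abs] using h3
            rwa [Real.norm_eq_abs] at hbd0
          have hval : |∫ t in s'..b, Real.sin (κmax * (t - s'))| =
              (1 - Real.cos (κmax * (b - s'))) / κmax := by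
            rw [sin_int_right_aux κmax s' b hκ.ne']
            apply abs_of_nonneg
            apply div_nonneg _ hκ.le
            linarith [Real.cos_le_one (κmax * (b - s'))]
          have hfin : (1 - Real.cos (κmax * (b - s'))) / κmax ≤
              (1 - Real.cos (κmax * (b - a) / 2)) / κmax := by
            have hcc : Real.cos (κmax * (b - a) / 2) ≤ Real.cos (κmax * (b - s')) := by
              apply Real.cos_le_cos_of_nonneg_of_le_pi
              · exact mul_nonneg hκ.le (by linarith [hs'mem.2])
              · linarith
              · calc κmax * (b - s') ≤ κmax * ((b - a) / 2) := mul_le_mul_of_nonneg_left (by linarith) hκ.le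
                  _ = κmax * (b - a) / 2 := by ring
            exact (div_le_div_iff_of_pos_right hκ).mpr (by linarith)
          calc |⟪γ s' - γ a, n⟫|
              ≤ |∫ t in s'..b, Real.sin (κmax * (t - s'))| := hbd
            _ = (1 - Real.cos (κmax * (b - s'))) / κmax := hval
            _ ≤ _ := hfin
    -- the projection of γ s onto the chord lies inside the segment
    have hhs0 : 0 ≤ ⟪γ s - γ a, e⟫ := by
      rw [hftc e a s]
      apply intervalIntegral.integral_nonneg hs.1
      intro u hu
      have hu' : u ∈ Icc a b := ⟨hu.1, le_trans hu.2 hs.2⟩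
      have h2 : ⟪γ' u, e⟫ = ‖γ b - γ a‖⁻¹ * ⟪γ b - γ a, γ' u⟫ := by
        rw [he, real_inner_smul_right, real_inner_comm]
      rw [h2]
      exact mul_nonneg (inv_nonneg.mpr (norm_nonneg _)) (hsinnn u hu')
    have hhsC : ⟪γ s - γ a, e⟫ ≤ ‖γ b - γ a‖ := by
      have hnn : 0 ≤ ⟪γ b - γ s, e⟫ := by
        rw [hftc e s b]
        apply intervalIntegral.integral_nonneg hs.2
        intro u hu
        have hu' : u ∈ Icc a b := ⟨le_trans hs.1 hu.1, hu.2⟩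
        have h2 : ⟪γ' u, e⟫ = ‖γ b - γ a‖⁻¹ * ⟪γ b - γ a, γ' u⟫ := by
          rw [he, real_inner_smul_right, real_inner_comm]
        rw [h2]
        exact mul_nonneg (inv_nonneg.mpr (norm_nonneg _)) (hsinnn u hu')
      have hCe : ⟪γ b - γ a, e⟫ = ‖γ b - γ a‖ := by
        rw [he, real_inner_smul_right, real_inner_self_eq_norm_sq, pow_two,
          inv_mul_cancel_left₀ hCpos.ne']
      have hsplit : ⟪γ b - γ a, e⟫ = ⟪γ b - γ s, e⟫ + ⟪γ s - γ a, e⟫ := by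
        rw [← inner_add_left]
        congr 1
        abel
      linarith
    have hr0 : 0 ≤ ⟪γ s - γ a, e⟫ / ‖γ b - γ a‖ := div_nonneg hhs0 (norm_nonneg _)
    have hr1 : ⟪γ s - γ a, e⟫ / ‖γ b - γ a‖ ≤ 1 := (div_le_one hCpos).mpr hhsC
    have hQmem : γ a + (⟪γ s - γ a, e⟫ / ‖γ b - γ a‖) • (γ b - γ a) ∈
        segment ℝ (γ a) (γ b) := by
      rw [segment_eq_image']
      exact ⟨_, ⟨hr0, hr1⟩, rfl⟩
    have hdist : dist (γ s) (γ a + (⟪γ s - γ a, e⟫ / ‖γ b - γ a‖) • (γ b - γ a)) =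
        |⟪γ s - γ a, n⟫| := by
      rw [dist_eq_norm]
      have hrv : (⟪γ s - γ a, e⟫ / ‖γ b - γ a‖) • (γ b - γ a) = ⟪γ s - γ a, e⟫ • e := by
        rw [he, smul_smul, div_eq_mul_inv]
      have hptw : γ s - (γ a + (⟪γ s - γ a, e⟫ / ‖γ b - γ a‖) • (γ b - γ a)) =
          ⟪γ s - γ a, n⟫ • n := by
        rw [hrv]
        have hdec := hdecomp (γ s - γ a)
        calc γ s - (γ a + ⟪γ s - γ a, e⟫ • e)
            = (γ s - γ a) - ⟪γ s - γ a, e⟫ • e := by abel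
          _ = ⟪γ s - γ a, n⟫ • n := sub_eq_iff_eq_add'.mpr hdec
      rw [hptw, norm_smul, hn1, mul_one, Real.norm_eq_abs]
    calc infDist (γ s) (segment ℝ (γ a) (γ b))
        ≤ dist (γ s) (γ a + (⟪γ s - γ a, e⟫ / ‖γ b - γ a‖) • (γ b - γ a)) :=
          infDist_le_dist_of_mem hQmem
      _ = |⟪γ s - γ a, n⟫| := hdist
      _ ≤ |⟪γ s' - γ a, n⟫| := hs'max hs
      _ ≤ _ := hKB

/-- Chord error bound for a curvature-bounded arc-length-parametrized planar curve. -/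
theorem chord_error_bound (κmax Δs s₀ : ℝ) (hκ : 0 < κmax)
    (hΔ : 0 ≤ Δs) (hΔπ : Δs ≤ Real.pi / κmax)
    (γ γ' γ'' : ℝ → EuclideanSpace ℝ (Fin 2))
    (hd1 : ∀ s, HasDerivAt γ (γ' s) s)
    (hd2 : ∀ s, HasDerivAt γ' (γ'' s) s)
    (hunit : ∀ s, ‖γ' s‖ = 1)
    (hcurv : ∀ s, ‖γ'' s‖ ≤ κmax) :
    ∀ s ∈ Icc s₀ (s₀ + Δs),
      infDist (γ s) (segment ℝ (γ s₀) (γ (s₀ + Δs))) ≤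
        (1 - Real.cos (κmax * Δs / 2)) / κmax := by
  intro s hs
  have hπ : κmax * (s₀ + Δs - s₀) ≤ Real.pi := by
    rw [le_div_iff₀ hκ] at hΔπ
    have h1 : s₀ + Δs - s₀ = Δs := by ring
    rw [h1]
    linarith
  have h := chord_aux κmax s₀ (s₀ + Δs) hκ (by linarith) hπ γ γ' γ'' hd1 hd2 hunit hcurv s hs
  have h2 : s₀ + Δs - s₀ = Δs := by ring
  rw [h2] at h
  exact h
end

section
/- In FIR-based corner blending, overlapping two consecutive constant-speed segment motions causes a path deviation at the corner bounded by the overlap: if motion 1 moves with velocity V·u₁ on [0, t₁] and motion 2 with velocity V·u₂ starting at time t₁ - Δ (overlap Δ ≥ 0), the superposed trajectory's distance to the corner vertex P = V·t₁·u₁ attains minimum value (V·Δ/2)·|u₁ - u₂| = V·Δ·sin(θ/2), where θ is the angle between u₁ and u₂. -/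
open scoped RealInnerProductSpace

lemma fir_key_ineq (a b m c : ℝ) (ha : 0 ≤ a) (hb : 0 ≤ b) (hm0 : 0 ≤ m)
    (hm : m ≤ a + b) (hc1 : -1 ≤ c) (hc2 : c ≤ 1) :
    m ^ 2 * (1 - c) / 2 ≤ a ^ 2 + b ^ 2 - 2 * a * b * c := by
  have h1 : 0 ≤ (1 + c) * (a - b) ^ 2 := mul_nonneg (by linarith) (sq_nonneg _)
  have h2 : 0 ≤ (1 - c) * ((a + b) ^ 2 - m ^ 2) := by
    apply mul_nonneg (by linarith)
    nlinarith
  nlinarith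

/-- FIR corner blending by overlapping two constant-speed segment motions:
the superposed trajectory's distance to the corner vertex `P = V t₁ u₁` attains
its minimum `(VΔ/2)·‖u₁ - u₂‖ = VΔ·sin(θ/2)` at time `t = t₁ - Δ/2`. -/
theorem fir_corner_overlap_deviation (Vf t₁ Δ : ℝ) (hV : 0 < Vf) (hΔ : 0 ≤ Δ)
    (hΔt : Δ ≤ t₁)
    (u₁ u₂ : EuclideanSpace ℝ (Fin 2)) (h1 : ‖u₁‖ = 1) (h2 : ‖u₂‖ = 1) :
    let x : ℝ → EuclideanSpace ℝ (Fin 2) := fun t =>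
      (Vf * min t t₁) • u₁ + (Vf * max (t - (t₁ - Δ)) 0) • u₂
    let P := (Vf * t₁) • u₁
    (∀ t : ℝ, Vf * Δ / 2 * ‖u₁ - u₂‖ ≤ ‖x t - P‖) ∧
    ‖x (t₁ - Δ / 2) - P‖ = Vf * Δ / 2 * ‖u₁ - u₂‖ ∧
    Vf * Δ / 2 * ‖u₁ - u₂‖ = Vf * Δ * Real.sin (Real.arccos ⟪u₁, u₂⟫ / 2) := by
  intro x P
  set c : ℝ := ⟪u₁, u₂⟫ with hc
  have hcabs : |c| ≤ 1 := by
    have := abs_real_inner_le_norm u₁ u₂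
    rwa [h1, h2, one_mul] at this
  have hc1 : -1 ≤ c := (abs_le.mp hcabs).1
  have hc2 : c ≤ 1 := (abs_le.mp hcabs).2
  -- squared norm of b•u₂ - a•u₁
  have hnsq : ∀ a b : ℝ, ‖b • u₂ - a • u₁‖ ^ 2 = a ^ 2 + b ^ 2 - 2 * a * b * c := by
    intro a b
    have hcomm : (inner ℝ u₂ u₁ : ℝ) = c := by rw [hc]; exact real_inner_comm u₁ u₂
    rw [norm_sub_sq_real, norm_smul, norm_smul, h1, h2, real_inner_smul_left,
      real_inner_smul_right, hcomm, Real.norm_eq_abs, Real.norm_eq_abs,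
      mul_one, mul_one, sq_abs, sq_abs]
    ring
  have hu12 : ‖u₁ - u₂‖ ^ 2 = 2 - 2 * c := by
    rw [norm_sub_sq_real, h1, h2]; ring
  -- decomposition of x t - P
  have hxP : ∀ t : ℝ, x t - P =
      (Vf * max (t - (t₁ - Δ)) 0) • u₂ - (Vf * (t₁ - min t t₁)) • u₁ := by
    intro t
    simp only [x, P]
    module
  have htgt : 0 ≤ Vf * Δ / 2 * ‖u₁ - u₂‖ := by positivity
  refine ⟨?_, ?_, ?_⟩
  · intro t
    set a : ℝ := Vf * (t₁ - min t t₁) with ha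
    set b : ℝ := Vf * max (t - (t₁ - Δ)) 0 with hb
    have ha0 : 0 ≤ a := mul_nonneg hV.le (by simp [min_le_right])
    have hb0 : 0 ≤ b := mul_nonneg hV.le (le_max_right _ _)
    have hab : Vf * Δ ≤ a + b := by
      rcases le_total t t₁ with h | h
      · have hmin : min t t₁ = t := min_eq_left h
        have : t - (t₁ - Δ) ≤ max (t - (t₁ - Δ)) 0 := le_max_left _ _
        rw [ha, hb, hmin]
        nlinarith
      · have hmin : min t t₁ = t₁ := min_eq_right h
        have h3 : Δ ≤ max (t - (t₁ - Δ)) 0 := le_trans (by linarith) (le_max_left _ _)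
        rw [ha, hb, hmin]
        nlinarith
    have hsq : (Vf * Δ) ^ 2 * (1 - c) / 2 ≤ ‖x t - P‖ ^ 2 := by
      rw [hxP t, hnsq]
      exact fir_key_ineq a b (Vf * Δ) c ha0 hb0 (by positivity) hab hc1 hc2
    have htgtsq : (Vf * Δ / 2 * ‖u₁ - u₂‖) ^ 2 = (Vf * Δ) ^ 2 * (1 - c) / 2 := by
      rw [mul_pow, hu12]; ring
    nlinarith [norm_nonneg (x t - P), htgt]
  · have hΔ2 : (0:ℝ) ≤ Δ / 2 := by linarith
    have hmin : min (t₁ - Δ / 2) t₁ = t₁ - Δ / 2 := min_eq_left (by linarith)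
    have hmax : max (t₁ - Δ / 2 - (t₁ - Δ)) 0 = Δ / 2 := by
      rw [max_eq_left (by linarith)]; ring
    have : x (t₁ - Δ / 2) - P = (Vf * Δ / 2) • (u₂ - u₁) := by
      rw [hxP, hmin, hmax]
      module
    rw [this, norm_smul, norm_sub_rev, Real.norm_eq_abs,
      abs_of_nonneg (by positivity : (0:ℝ) ≤ Vf * Δ / 2)]
  · have harc : Real.arccos c / 2 ∈ Set.Icc 0 (Real.pi / 2) := by
      constructor
      · linarith [Real.arccos_nonneg c]
      · linarith [Real.arccos_le_pi c]
    have hsin0 : 0 ≤ Real.sin (Real.arccos c / 2) :=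
      Real.sin_nonneg_of_nonneg_of_le_pi harc.1 (by linarith [harc.2, Real.pi_pos])
    have hsinsq : Real.sin (Real.arccos c / 2) ^ 2 = (1 - c) / 2 := by
      rw [← sq_abs, Real.abs_sin_half, Real.cos_arccos hc1 hc2,
        Real.sq_sqrt (by linarith : (0:ℝ) ≤ (1 - c) / 2)]
    have h2s : ‖u₁ - u₂‖ = 2 * Real.sin (Real.arccos c / 2) := by
      have e1 : ‖u₁ - u₂‖ = Real.sqrt (‖u₁ - u₂‖ ^ 2) := (Real.sqrt_sq (norm_nonneg _)).symm
      have e2 : 2 * Real.sin (Real.arccos c / 2) =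
          Real.sqrt ((2 * Real.sin (Real.arccos c / 2)) ^ 2) :=
        (Real.sqrt_sq (by positivity)).symm
      rw [e1, e2, hu12]
      congr 1
      rw [mul_pow, hsinsq]
      ring
    rw [h2s]; ring
end
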